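/- Let $U$ and $V$ be real Hilbert spaces, $B : U \to V'$ a bounded linear operator satisfying the bounded-below condition $\gamma \|u\|_U \leq \|B u\|_{V'}$ for some $\gamma > 0$ and all $u \in U$, let $\ell \in V'$, and let $U_h \subseteq U$ be a finite-dimensional subspace. Then there exists a unique minimizer $u_h \in U_h$ of $\|B u - \ell\|_{V'}$ over $U_h$, and if $u \in U$ satisfies $B u = \ell$, then $\|u - u_h\|_U \leq \frac{\|B\|}{\gamma} \inf_{w \in U_h} \|u - w\|_U$. -/

import Mathlib

/-!
The Riesz isometry `V ≃ V'` makes `V'` strictly convex. In any real normed space the distance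
to a finite-dimensional subspace is attained, and in a strictly convex one it is attained at a
single point; as `B` is bounded below, hence injective, the residual `‖B · - ℓ‖` has exactly
one minimizer on `U_h`. Quasi-optimality is the chain
`γ‖u - u_h‖ ≤ ‖B (u - u_h)‖ = ‖B u_h - ℓ‖ ≤ ‖B w - ℓ‖ = ‖B (u - w)‖ ≤ ‖B‖ ‖u - w‖`.
-/

section NearestPoint

variable {F : Type*} [NormedAddCommGroup F] [NormedSpace ℝ F]

theorem Submodule.exists_isMinOn_norm_sub (L : Submodule ℝ F) [FiniteDimensional ℝ L] (y : F) :
    ∃ p ∈ L, IsMinOn (fun v => ‖v - y‖) L p := by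
  have hbdd : Bornology.IsBounded {v : L | ‖(v : F) - y‖ ≤ ‖((0 : L) : F) - y‖} := by
    refine (Metric.isBounded_closedBall (x := (0 : L)) (r := 2 * ‖y‖)).subset fun v hv => ?_
    simp only [Set.mem_ofPred_eq, ZeroMemClass.coe_zero, zero_sub, norm_neg] at hv
    rw [mem_closedBall_zero_iff, Submodule.coe_norm]
    calc ‖(v : F)‖ ≤ ‖(v : F) - y‖ + ‖y‖ := norm_le_norm_sub_add _ _
      _ ≤ 2 * ‖y‖ := by linarith
  have hcont : Continuous fun v : L => ‖(v : F) - y‖ := by fun_prop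
  obtain ⟨p, hp⟩ := hcont.exists_forall_le_of_isBounded 0 hbdd
  exact ⟨p, p.2, fun v hv => hp ⟨v, hv⟩⟩

variable [StrictConvexSpace ℝ F]

theorem Convex.eq_of_isMinOn_norm_sub {s : Set F} (hs : Convex ℝ s) {y p q : F}
    (hp : p ∈ s) (hq : q ∈ s) (hpmin : IsMinOn (fun v => ‖v - y‖) s p)
    (hqmin : IsMinOn (fun v => ‖v - y‖) s q) : p = q := by
  have heq : ‖p - y‖ = ‖q - y‖ := le_antisymm (hpmin hq) (hqmin hp)
  by_contra hne
  have hlt : ‖(1 / 2 : ℝ) • ((p - y) + (q - y))‖ < ‖p - y‖ :=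
    (norm_midpoint_lt_iff heq).2 fun h => hne (sub_left_injective h)
  have hmid : (1 / 2 : ℝ) • p + (1 / 2 : ℝ) • q ∈ s :=
    hs hp hq (by norm_num) (by norm_num) (by norm_num)
  refine hlt.not_ge ((isMinOn_iff.1 hpmin _ hmid).trans_eq ?_)
  congr 1
  module

end NearestPoint

instance InnerProductSpace.strictConvexSpace_strongDual {V : Type*} [NormedAddCommGroup V]
    [InnerProductSpace ℝ V] [CompleteSpace V] : StrictConvexSpace ℝ (StrongDual ℝ V) :=
  (InnerProductSpace.toDual ℝ V).symm.toLinearIsometry.strictConvexSpace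

section ResidualMinimization

variable {E F : Type*} [NormedAddCommGroup E] [NormedAddCommGroup F]

theorem LinearMap.injective_of_mul_norm_le {𝕜 : Type*} [NormedField 𝕜] [NormedSpace 𝕜 E]
    [NormedSpace 𝕜 F] (A : E →ₗ[𝕜] F) {γ : ℝ} (hγ : 0 < γ) (hA : ∀ w, γ * ‖w‖ ≤ ‖A w‖) :
    Function.Injective A := by
  refine (injective_iff_map_eq_zero A).2 fun w hw => norm_le_zero_iff.1 ?_
  have := hA w
  rw [hw, norm_zero] at this
  exact nonpos_of_mul_nonpos_right this hγ

theorem ContinuousLinearMap.norm_sub_le_of_isMinOn_norm_sub {𝕜 : Type*}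
    [NontriviallyNormedField 𝕜] [NormedSpace 𝕜 E] [NormedSpace 𝕜 F] (A : E →L[𝕜] F) {γ : ℝ}
    (hγ : 0 < γ) (hA : ∀ w, γ * ‖w‖ ≤ ‖A w‖) {s : Set E} {u uh w : E}
    (hmin : IsMinOn (fun v => ‖A v - A u‖) s uh) (hw : w ∈ s) :
    ‖u - uh‖ ≤ ‖A‖ / γ * ‖u - w‖ := by
  rw [div_mul_eq_mul_div, le_div_iff₀ hγ, mul_comm]
  calc γ * ‖u - uh‖ ≤ ‖A (u - uh)‖ := hA _
    _ = ‖A uh - A u‖ := by rw [map_sub, norm_sub_rev]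
    _ ≤ ‖A w - A u‖ := isMinOn_iff.1 hmin w hw
    _ = ‖A (u - w)‖ := by rw [map_sub, norm_sub_rev]
    _ ≤ ‖A‖ * ‖u - w‖ := A.le_opNorm _

variable [NormedSpace ℝ E] [NormedSpace ℝ F]

theorem LinearMap.exists_isMinOn_norm_sub (A : E →ₗ[ℝ] F) (K : Submodule ℝ E)
    [FiniteDimensional ℝ K] (y : F) : ∃ x ∈ K, IsMinOn (fun w => ‖A w - y‖) K x := by
  obtain ⟨_, ⟨x, hx, rfl⟩, hmin⟩ := (K.map A).exists_isMinOn_norm_sub y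
  exact ⟨x, hx, fun w hw => hmin (Submodule.mem_map_of_mem hw)⟩

theorem LinearMap.eq_of_isMinOn_norm_sub [StrictConvexSpace ℝ F] (A : E →ₗ[ℝ] F)
    (hA : Function.Injective A) (K : Submodule ℝ E) {y : F} {x x' : E} (hx : x ∈ K)
    (hx' : x' ∈ K) (hmin : IsMinOn (fun w => ‖A w - y‖) K x)
    (hmin' : IsMinOn (fun w => ‖A w - y‖) K x') : x = x' := by
  have hmap : ∀ {z}, IsMinOn (fun w => ‖A w - y‖) K z →
      IsMinOn (fun v => ‖v - y‖) (K.map A) (A z) := by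
    rintro z hz _ ⟨w, hw, rfl⟩
    exact hz hw
  exact hA <| (K.map A).convex.eq_of_isMinOn_norm_sub (Submodule.mem_map_of_mem hx)
    (Submodule.mem_map_of_mem hx') (hmap hmin) (hmap hmin')

end ResidualMinimization

theorem stmt19_general {U V : Type*} [NormedAddCommGroup U] [InnerProductSpace ℝ U]
    [NormedAddCommGroup V] [InnerProductSpace ℝ V]
    [CompleteSpace V]
    (B : U →L[ℝ] StrongDual ℝ V) (γ : ℝ) (hγ : 0 < γ)
    (hbb : ∀ w : U, γ * ‖w‖ ≤ ‖B w‖)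
    (ℓ : StrongDual ℝ V) (Uh : Submodule ℝ U) [FiniteDimensional ℝ Uh]
    (u : U) (hu : B u = ℓ) :
    ∃ uh ∈ Uh, (∀ w ∈ Uh, ‖B uh - ℓ‖ ≤ ‖B w - ℓ‖) ∧
      (∀ uh' ∈ Uh, (∀ w ∈ Uh, ‖B uh' - ℓ‖ ≤ ‖B w - ℓ‖) → uh' = uh) ∧
      (∀ w ∈ Uh, ‖u - uh‖ ≤ (‖B‖ / γ) * ‖u - w‖) := by
  obtain ⟨uh, huh, hmin⟩ := (B : U →ₗ[ℝ] StrongDual ℝ V).exists_isMinOn_norm_sub Uh ℓ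
  have hinj := (B : U →ₗ[ℝ] StrongDual ℝ V).injective_of_mul_norm_le hγ hbb
  refine ⟨uh, huh, hmin, fun uh' huh' hmin' => ?_, fun w hw => ?_⟩
  · exact (B : U →ₗ[ℝ] StrongDual ℝ V).eq_of_isMinOn_norm_sub hinj Uh huh' huh hmin' hmin
  · subst hu
    exact B.norm_sub_le_of_isMinOn_norm_sub hγ hbb hmin hw

/-- Quasi-optimality of the ideal minimum-residual (DPG) method: if
`B : U → V'` is bounded below (`γ‖u‖ ≤ ‖Bu‖`), then over any finite-dimensional
subspace `U_h` the residual `‖B · − ℓ‖` has a unique minimizer `u_h`, and if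
`B u = ℓ` then `‖u − u_h‖ ≤ (‖B‖/γ) inf_{w ∈ U_h} ‖u − w‖`. -/
theorem stmt19 {U V : Type*} [NormedAddCommGroup U] [InnerProductSpace ℝ U]
    [CompleteSpace U] [NormedAddCommGroup V] [InnerProductSpace ℝ V]
    [CompleteSpace V]
    (B : U →L[ℝ] StrongDual ℝ V) (γ : ℝ) (hγ : 0 < γ)
    (hbb : ∀ w : U, γ * ‖w‖ ≤ ‖B w‖)
    (ℓ : StrongDual ℝ V) (Uh : Submodule ℝ U) [FiniteDimensional ℝ Uh]
    (u : U) (hu : B u = ℓ) :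
    ∃ uh ∈ Uh, (∀ w ∈ Uh, ‖B uh - ℓ‖ ≤ ‖B w - ℓ‖) ∧
      (∀ uh' ∈ Uh, (∀ w ∈ Uh, ‖B uh' - ℓ‖ ≤ ‖B w - ℓ‖) → uh' = uh) ∧
      (∀ w ∈ Uh, ‖u - uh‖ ≤ (‖B‖ / γ) * ‖u - w‖) :=
  stmt19_general B γ hγ hbb ℓ Uh u hu
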